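/- There exists an irrational number x ∈ [0,1] that is not normal to base 2, such that the closure of {2^n x (mod 1) : n ≥ 1} equals [0,1] and the closure of {3^n x (mod 1) : n ≥ 1} equals [0,1]. -/

import Mathlib

open Filter Set
open scoped Classical

/-- The `j`-th digit of `x` in base `b`: `a_j(x) = ⌊b^j x⌋ mod b`. -/
noncomputable def digit (b : ℕ) (x : ℝ) (j : ℕ) : ℕ :=
  (⌊(b : ℝ) ^ j * x⌋ % b).toNat

/-- The number of occurrences of the block `d = (d_1, …, d_k)` among the first `N` digits
of `x` in base `b`: `#{0 ≤ j ≤ N - k : a_{j+1}(x) = d_1, …, a_{j+k}(x) = d_k}`. -/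
noncomputable def blockCount (b : ℕ) (x : ℝ) {k : ℕ} (d : Fin k → ℕ) (N : ℕ) : ℕ :=
  ((Finset.range (N + 1 - k)).filter
    (fun j => ∀ i : Fin k, digit b x (j + 1 + (i : ℕ)) = d i)).card

/-- `x` is normal to base `b` if every block of `k` digits occurs with frequency `b⁻ᵏ`. -/
def IsNormal (b : ℕ) (x : ℝ) : Prop :=
  ∀ k : ℕ, 1 ≤ k → ∀ d : Fin k → ℕ, (∀ i, d i < b) →
    Tendsto (fun N : ℕ => (blockCount b x d N : ℝ) / (N : ℝ)) atTop
      (nhds (((b : ℝ) ^ k)⁻¹))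

/-- The closure of the orbit `{b^n x (mod 1) : n ≥ 1}`. -/
noncomputable def orbitClosure (b : ℕ) (x : ℝ) : Set ℝ :=
  closure {y : ℝ | ∃ n : ℕ, 1 ≤ n ∧ y = Int.fract ((b : ℝ) ^ n * x)}

/-! Baire category: a residual set of reals `x` consists of irrationals whose orbits under
`x ↦ 2x` and `x ↦ 3x` modulo `1` are dense and for which, infinitely often, more than three
quarters of the first `N` binary digits are `0` (so the frequency of the digit `0` cannot tend
to `1/2`). The orbit and digit conditions are countable intersections of dense open sets; density
holds because every nonempty open set contains a `b`-adic interval `[k / b^n, (k + 1) / b^n]` of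
every sufficiently large level `n`. -/

lemma eventually_exists_Icc_subset {b : ℝ} (hb : 1 < b) {V : Set ℝ} (hV : IsOpen V) {y : ℝ}
    (hy : y ∈ V) : ∀ᶠ n : ℕ in atTop, ∃ k : ℤ, Icc (k / b ^ n) ((k + 1) / b ^ n) ⊆ V := by
  obtain ⟨ε, hε, hball⟩ := Metric.isOpen_iff.1 hV y hy
  have hsmall : ∀ᶠ n : ℕ in atTop, (b⁻¹) ^ n < ε :=
    (tendsto_pow_atTop_nhds_zero_of_lt_one (inv_nonneg.2 (zero_le_one.trans hb.le))
      (inv_lt_one_of_one_lt₀ hb)).eventually (gt_mem_nhds hε)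
  filter_upwards [hsmall] with n hn
  have hbn : 0 < b ^ n := pow_pos (zero_lt_one.trans hb) n
  rw [inv_pow, inv_eq_one_div] at hn
  refine ⟨⌊b ^ n * y⌋, fun z ⟨hz₁, hz₂⟩ => hball ?_⟩
  have hfl₁ : (⌊b ^ n * y⌋ : ℝ) / b ^ n ≤ y := by
    rw [div_le_iff₀ hbn, mul_comm]; exact Int.floor_le _
  have hfl₂ : y < (⌊b ^ n * y⌋ + 1) / b ^ n := by
    rw [lt_div_iff₀ hbn, mul_comm]; exact Int.lt_floor_add_one _
  have hlen : ((⌊b ^ n * y⌋ : ℝ) + 1) / b ^ n = ⌊b ^ n * y⌋ / b ^ n + 1 / b ^ n := add_div _ _ _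
  rw [Metric.mem_ball, Real.dist_eq, abs_lt]
  constructor <;> linarith

lemma isOpen_preimage_fract {U : Set ℝ} (hU : IsOpen U) (h0 : (0 : ℝ) ∉ U) :
    IsOpen (Int.fract ⁻¹' U) := by
  refine isOpen_iff_mem_nhds.2 fun y hy => ContinuousAt.preimage_mem_nhds ?_ (hU.mem_nhds hy)
  refine continuousAt_fract fun h => h0 ?_
  rwa [mem_preimage, Int.fract, ← h, sub_self] at hy

lemma isOpen_setOf_exists_fract_mem (b : ℝ) {U : Set ℝ} (hU : IsOpen U) (h0 : (0 : ℝ) ∉ U) :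
    IsOpen {x : ℝ | ∃ n ≥ 1, Int.fract (b ^ n * x) ∈ U} := by
  simp only [Set.ofPred_exists, Set.ofPred_and]
  exact isOpen_iUnion fun n => isOpen_const.inter
    ((isOpen_preimage_fract hU h0).preimage (continuous_const.mul continuous_id))

lemma dense_setOf_exists_fract_mem {b : ℝ} (hb : 1 < b) {U : Set ℝ} (hU : (U ∩ Ico 0 1).Nonempty) :
    Dense {x : ℝ | ∃ n ≥ 1, Int.fract (b ^ n * x) ∈ U} := by
  obtain ⟨t, htU, ht₀, ht₁⟩ := hU
  refine dense_iff_inter_open.2 fun V hV ⟨y, hy⟩ => ?_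
  obtain ⟨n, hn, k, hkV⟩ :=
    ((eventually_ge_atTop 1).and (eventually_exists_Icc_subset hb hV hy)).exists
  have hbn : 0 < b ^ n := pow_pos (zero_lt_one.trans hb) n
  refine ⟨(k + t) / b ^ n, hkV ⟨?_, ?_⟩, n, hn, ?_⟩
  · gcongr; linarith
  · gcongr
  · rwa [mul_div_cancel₀ _ hbn.ne', Int.fract_intCast_add, Int.fract_eq_self.2 ⟨ht₀, ht₁⟩]

lemma closure_eq_Icc_of_forall_rat {S : Set ℝ} {u v : ℝ} (huv : u < v) (hS : S ⊆ Icc u v)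
    (h : ∀ p q : ℚ, (Ioo (p : ℝ) q ∩ Ioo u v).Nonempty → (Ioo (p : ℝ) q ∩ S).Nonempty) :
    closure S = Icc u v := by
  refine (closure_minimal hS isClosed_Icc).antisymm ?_
  rw [← closure_Ioo huv.ne]
  refine closure_minimal (fun y hy => ?_) isClosed_closure
  rw [Real.isTopologicalBasis_Ioo_rat.mem_closure_iff]
  simp only [mem_iUnion, mem_singleton_iff]
  rintro _ ⟨p, q, -, rfl⟩ hyo
  exact h p q ⟨y, hyo, hy⟩

lemma eventually_residual_orbitClosure_eq_Icc {b : ℕ} (hb : 1 < b) :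
    ∀ᶠ x in residual ℝ, orbitClosure b x = Icc 0 1 := by
  have hhit : ∀ᶠ x in residual ℝ, ∀ p q : ℚ, (Ioo (p : ℝ) q ∩ Ioo 0 1).Nonempty →
      ∃ n ≥ 1, Int.fract ((b : ℝ) ^ n * x) ∈ Ioo (p : ℝ) q ∩ Ioo 0 1 := by
    -- `Prop` is `Countable`, so this also moves the implication out of the `∀ᶠ`.
    simp only [eventually_countable_forall]
    intro p q hpq
    refine residual_of_dense_open
      (isOpen_setOf_exists_fract_mem _ (isOpen_Ioo.inter isOpen_Ioo) fun h => h.2.1.false) ?_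
    exact dense_setOf_exists_fract_mem (by exact_mod_cast hb)
      (hpq.mono fun t ht => ⟨ht, ht.2.1.le, ht.2.2⟩)
  filter_upwards [hhit] with x hx
  refine closure_eq_Icc_of_forall_rat zero_lt_one ?_ fun p q hpq => ?_
  · rintro _ ⟨n, -, rfl⟩
    exact ⟨Int.fract_nonneg _, (Int.fract_lt_one _).le⟩
  · obtain ⟨n, hn, hmem⟩ := hx p q hpq
    exact ⟨_, hmem.1, n, hn, rfl⟩

lemma digit_eq_zero_of_mem_Ico {b : ℕ} (hb : 0 < b) {k : ℤ} {K N j : ℕ} (hKj : K ≤ j)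
    (hjN : j < N) {x : ℝ} (hx : x ∈ Ico (k / (b : ℝ) ^ K) (k / (b : ℝ) ^ K + 1 / (b : ℝ) ^ N)) :
    digit b x (j + 1) = 0 := by
  obtain ⟨e, rfl⟩ := Nat.exists_eq_add_of_le hKj
  set r := x - k / (b : ℝ) ^ K with hr
  have hr₀ : 0 ≤ r := by linarith [hx.1]
  have hr₁ : (b : ℝ) ^ (K + e + 1) * r < 1 := by
    calc (b : ℝ) ^ (K + e + 1) * r ≤ (b : ℝ) ^ N * r :=
          mul_le_mul_of_nonneg_right (pow_le_pow_right₀ (Nat.one_le_cast.2 hb) hjN) hr₀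
      _ < (b : ℝ) ^ N * (1 / (b : ℝ) ^ N) := by
          gcongr
          linarith [hx.2]
      _ = 1 := mul_one_div_cancel (by positivity)
  have hsplit :
      (b : ℝ) ^ (K + e + 1) * x = ((k * b ^ e * b : ℤ) : ℝ) + (b : ℝ) ^ (K + e + 1) * r := by
    rw [hr]; push_cast; field_simp; ring
  have hfloor : ⌊(b : ℝ) ^ (K + e + 1) * x⌋ = k * b ^ e * b := by
    rw [hsplit, Int.floor_intCast_add, Int.floor_eq_zero_iff.2 ⟨by positivity, hr₁⟩, add_zero]
  rw [digit, hfloor, Int.mul_emod_left]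
  rfl

lemma sub_le_blockCount_zero_of_mem_Ico {b : ℕ} (hb : 0 < b) {k : ℤ} {K N : ℕ} {x : ℝ}
    (hx : x ∈ Ico (k / (b : ℝ) ^ K) (k / (b : ℝ) ^ K + 1 / (b : ℝ) ^ N)) :
    N - K ≤ blockCount b x (fun _ : Fin 1 => 0) N := by
  rw [← Nat.card_Ico K N, blockCount, Nat.add_sub_cancel]
  refine Finset.card_le_card fun j hj => ?_
  rw [Finset.mem_Ico] at hj
  simp only [Finset.mem_filter, Finset.mem_range, Fin.forall_fin_one, Fin.val_zero, add_zero]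
  exact ⟨hj.2, digit_eq_zero_of_mem_Ico hb hj.1 hj.2 hx⟩

lemma eventually_residual_frequently_lt_blockCount_zero_div {b : ℕ} (hb : 1 < b) {c : ℝ}
    (hc : c < 1) :
    ∀ᶠ x in residual ℝ, ∃ᶠ N in atTop, c < (blockCount b x (fun _ : Fin 1 => 0) N : ℝ) / N := by
  simp only [frequently_atTop, eventually_countable_forall]
  intro m
  refine mem_of_superset (residual_of_dense_open isOpen_interior ?_) interior_subset
  refine dense_iff_inter_open.2 fun V hV ⟨y, hy⟩ => ?_
  obtain ⟨K, k, hKV⟩ := (eventually_exists_Icc_subset (b := b) (by exact_mod_cast hb) hV hy).exists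
  have hlarge : Tendsto (fun N : ℕ => (1 - c) * N) atTop atTop :=
    tendsto_natCast_atTop_atTop.const_mul_atTop (sub_pos.2 hc)
  obtain ⟨N, hN, hNc⟩ := ((eventually_ge_atTop (m + K + 1)).and
    (hlarge.eventually_gt_atTop (K : ℝ))).exists
  set J := Ioo (k / (b : ℝ) ^ K) (k / (b : ℝ) ^ K + 1 / (b : ℝ) ^ N)
  have hJ : J ⊆ {x | ∃ N ≥ m, c < (blockCount b x (fun _ : Fin 1 => 0) N : ℝ) / N} := by
    intro x hx
    have hcount := sub_le_blockCount_zero_of_mem_Ico (zero_lt_one.trans hb) (Ioo_subset_Ico_self hx)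
    have hcount' : (N : ℝ) - K ≤ blockCount b x (fun _ : Fin 1 => 0) N := by
      rw [← Nat.cast_sub (by omega)]; exact_mod_cast hcount
    refine ⟨N, by omega, (lt_div_iff₀ (by exact_mod_cast (by omega : 0 < N))).2 (by linarith)⟩
  have hJV : J ⊆ V := by
    have hshort : 1 / (b : ℝ) ^ N ≤ 1 / (b : ℝ) ^ K := one_div_pow_le_one_div_pow_of_le
      (by exact_mod_cast hb.le) (by omega)
    exact fun z hz => hKV ⟨hz.1.le, by rw [add_div]; linarith [hz.2]⟩
  obtain ⟨z, hz⟩ : J.Nonempty := nonempty_Ioo.2 (lt_add_of_pos_right _ (by positivity))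
  exact ⟨z, hJV hz, interior_maximal hJ isOpen_Ioo hz⟩

lemma not_isNormal_of_frequently_lt_blockCount_div {b k : ℕ} (hk : 1 ≤ k) {d : Fin k → ℕ}
    (hd : ∀ i, d i < b) {c : ℝ} (hc : ((b : ℝ) ^ k)⁻¹ < c) {x : ℝ}
    (hx : ∃ᶠ N in atTop, c < (blockCount b x d N : ℝ) / N) : ¬ IsNormal b x := fun hnormal =>
  let ⟨_, hgt, hlt⟩ := (hx.and_eventually ((hnormal k hk d hd).eventually (gt_mem_nhds hc))).exists
  lt_asymm hgt hlt

theorem stmt3 :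
    ∃ x ∈ Set.Icc (0 : ℝ) 1, Irrational x ∧ ¬ IsNormal 2 x ∧
      orbitClosure 2 x = Set.Icc 0 1 ∧ orbitClosure 3 x = Set.Icc 0 1 := by
  have hgeneric : ∀ᶠ x in residual ℝ, Irrational x ∧ ¬ IsNormal 2 x ∧
      orbitClosure 2 x = Icc 0 1 ∧ orbitClosure 3 x = Icc 0 1 := by
    refine eventually_residual_irrational.and (.and ?_ (.and ?_ ?_))
    · filter_upwards [eventually_residual_frequently_lt_blockCount_zero_div (b := 2) one_lt_two
        (c := 3 / 4) (by norm_num)] with x hx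
      exact not_isNormal_of_frequently_lt_blockCount_div le_rfl (fun _ => two_pos)
        (by norm_num) hx
    · exact eventually_residual_orbitClosure_eq_Icc one_lt_two
    · exact eventually_residual_orbitClosure_eq_Icc (by norm_num)
  obtain ⟨x, hx, hx01⟩ := (dense_of_mem_residual hgeneric).exists_mem_open isOpen_Ioo
    (nonempty_Ioo.2 zero_lt_one)
  exact ⟨x, Ioo_subset_Icc_self hx01, hx⟩
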